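/- Let P(x) be a monic polynomial of degree m over C and c ∈ C a nonzero constant. If Q(x) is a polynomial whose square divides P(x)^2 + c, then ∏ over distinct multiple roots x_i of P(x)^2 + c of (x - x_i)^{m_i - 1} divides P'(x), where m_i is the multiplicity of x_i; in particular the sum ∑ (m_i - 1) over all distinct roots of P(x)^2 + c is at most m - 1. -/

import Mathlib

/-!
Every root of `P ^ 2 + c` of multiplicity `mᵢ` is a root of multiplicity at least `mᵢ - 1` of its
derivative `2 P P'`. Since `(P ^ 2 + c) - P · P = c` is a unit, `P` shares no root with `P ^ 2 + c`,
so all of that multiplicity lands in `P'`, whose degree is at most `m - 1`.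
-/

open Polynomial

namespace Polynomial

theorem natDegree_prod_X_sub_C_pow {R ι : Type*} [CommRing R] [Nontrivial R] (s : Finset ι)
    (x : ι → R) (n : ι → ℕ) :
    (∏ i ∈ s, (X - C (x i)) ^ n i).natDegree = ∑ i ∈ s, n i := by
  rw [natDegree_prod_of_monic _ _ fun i _ => (monic_X_sub_C (x i)).pow (n i)]
  exact Finset.sum_congr rfl fun i _ => by
    rw [(monic_X_sub_C (x i)).natDegree_pow, natDegree_X_sub_C, mul_one]

theorem prod_X_sub_C_pow_pred_dvd_derivative {K ι : Type*} [Field K] [Fintype ι] {x : ι → K}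
    (hx : Function.Injective x) (n : ι → ℕ) {f : K[X]} (hf : ∏ i, (X - C (x i)) ^ n i ∣ f) :
    ∏ i, (X - C (x i)) ^ (n i - 1) ∣ derivative f :=
  Fintype.prod_dvd_of_coprime (fun _ _ hij => (pairwise_coprime_X_sub_C hx hij).pow) fun i =>
    pow_sub_one_dvd_derivative_of_pow_dvd <|
      (Finset.dvd_prod_of_mem (fun i => (X - C (x i)) ^ n i) (Finset.mem_univ i)).trans hf

theorem isCoprime_sq_add_C {R : Type*} [CommRing R] {c : R} (hc : IsUnit c) (p : R[X]) :
    IsCoprime (p ^ 2 + C c) p := by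
  have hC : IsCoprime (C c) p := by
    simpa using (isCoprime_mul_unit_left_left (hc.map C) 1 p).mpr isCoprime_one_left
  simpa only [sq, add_comm] using hC.add_mul_left_left p

theorem dvd_derivative_of_dvd_sq_add_C {K : Type*} [Field K] [NeZero (2 : K)] {c : K} (hc : c ≠ 0)
    {p q : K[X]} (hq : q ∣ p ^ 2 + C c) (hq' : q ∣ derivative (p ^ 2 + C c)) :
    q ∣ derivative p := by
  have hqp : IsCoprime q p := (isCoprime_sq_add_C hc.isUnit p).of_isCoprime_of_dvd_left hq
  rw [derivative_add, derivative_C, add_zero, derivative_sq, mul_right_comm] at hq'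
  exact (isUnit_C.mpr (NeZero.ne 2).isUnit).dvd_mul_left.mp (hqp.dvd_of_dvd_mul_right hq')

end Polynomial

theorem stmt3_general (m k : ℕ) (hm : 1 ≤ m) (P : Polynomial ℂ)
    (hdeg : P.natDegree = m) (c : ℂ) (hc : c ≠ 0) (x : Fin k → ℂ) (mi : Fin k → ℕ)
    (hx : Function.Injective x)
    (hfac : P ^ 2 + C c = ∏ i, (X - C (x i)) ^ mi i) :
    (∏ i, (X - C (x i)) ^ (mi i - 1)) ∣ derivative P ∧ ∑ i, (mi i - 1) ≤ m - 1 := by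
  have hdvd : ∏ i, (X - C (x i)) ^ (mi i - 1) ∣ P ^ 2 + C c :=
    hfac ▸ Finset.prod_dvd_prod_of_dvd _ _ fun i _ => pow_dvd_pow _ (Nat.sub_le _ _)
  have hdvd' : ∏ i, (X - C (x i)) ^ (mi i - 1) ∣ derivative (P ^ 2 + C c) :=
    prod_X_sub_C_pow_pred_dvd_derivative hx mi hfac.symm.dvd
  have hD : ∏ i, (X - C (x i)) ^ (mi i - 1) ∣ derivative P :=
    dvd_derivative_of_dvd_sq_add_C hc hdvd hdvd'
  have hP' : derivative P ≠ 0 := fun h => by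
    have := derivative_eq_zero.mp h
    omega
  refine ⟨hD, ?_⟩
  calc ∑ i, (mi i - 1)
      = (∏ i, (X - C (x i)) ^ (mi i - 1)).natDegree := (natDegree_prod_X_sub_C_pow _ _ _).symm
    _ ≤ (derivative P).natDegree := natDegree_le_of_dvd hD hP'
    _ ≤ m - 1 := hdeg ▸ natDegree_derivative_le P

/-- If P is monic of degree m over ℂ, c ≠ 0, and P^2 + c = ∏ (x - x_i)^{m_i} with
distinct roots x_i of multiplicities m_i, then ∏ (x - x_i)^{m_i - 1} divides P',
and in particular ∑ (m_i - 1) ≤ m - 1. -/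
theorem stmt3 (m k : ℕ) (hm : 1 ≤ m) (P : Polynomial ℂ) (hP : P.Monic)
    (hdeg : P.natDegree = m) (c : ℂ) (hc : c ≠ 0) (x : Fin k → ℂ) (mi : Fin k → ℕ)
    (hx : Function.Injective x) (hmi : ∀ i, 1 ≤ mi i)
    (hfac : P ^ 2 + C c = ∏ i, (X - C (x i)) ^ mi i) :
    (∏ i, (X - C (x i)) ^ (mi i - 1)) ∣ derivative P ∧ ∑ i, (mi i - 1) ≤ m - 1 :=
  stmt3_general m k hm P hdeg c hc x mi hx hfac
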